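/- arXiv:1107.0361 — 4 statements merged into one kernel-verified Lean document; each statement's English description precedes it below -/
import Mathlib

section
/- Let E be a sublinear expectation on H and X ∈ H. If the distribution of X is not linear, i.e., there exist bounded Lipschitz ψ₁, ψ₂ with E[ψ₁(X) + ψ₂(X)] ≠ E[ψ₁(X)] + E[ψ₂(X)], then there exists a bounded Lipschitz function φ ≥ 0 with E[φ(X)] = 1 and -E[-φ(X)] < 1. -/
structure SLE (Ω : Type*) where
  H : Submodule ℝ (Ω → ℝ)
  E : (Ω → ℝ) → ℝ
  const_mem : ∀ c : ℝ, (fun _ => c) ∈ H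
  mono : ∀ f g, f ∈ H → g ∈ H → (∀ ω, f ω ≤ g ω) → E f ≤ E g
  const : ∀ c : ℝ, E (fun _ => c) = c
  subadd : ∀ f g, f ∈ H → g ∈ H → E (f + g) ≤ E f + E g
  poshom : ∀ f, f ∈ H → ∀ l : ℝ, 0 ≤ l → E (l • f) = l * E f

def BLip (φ : ℝ → ℝ) : Prop :=
  (∃ K, LipschitzWith K φ) ∧ ∃ C, ∀ x, |φ x| ≤ C

/-!
Strict subadditivity `E[ψ₁(X) + ψ₂(X)] < E[ψ₁(X)] + E[ψ₂(X)]` forces the spread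
`E[ψ₂(X)] + E[-ψ₂(X)]` between upper and lower expectation of `ψ₂(X)` to be positive.
Shifting `ψ₂` by its bound `C` makes it nonnegative, and dividing by `E[ψ₂(X)] + C` normalises
the upper expectation to `1`; the lower expectation then equals
`(C - E[-ψ₂(X)]) / (E[ψ₂(X)] + C)`, which is `< 1` precisely because the spread is positive.
-/

namespace SLE

variable {Ω : Type*} (S : SLE Ω) {f g : Ω → ℝ}

theorem E_add_const (hf : f ∈ S.H) (c : ℝ) : S.E (f + fun _ => c) = S.E f + c := by
  have hle := S.subadd f (fun _ => c) hf (S.const_mem c)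
  have hge := S.subadd (f + fun _ => c) (fun _ => -c) (S.H.add_mem hf (S.const_mem c))
    (S.const_mem (-c))
  rw [show ((f + fun _ => c) + fun _ => -c) = f by funext ω; simp, S.const] at hge
  rw [S.const] at hle
  linarith

theorem E_mul_add_const (hf : f ∈ S.H) {l : ℝ} (hl : 0 ≤ l) (c : ℝ) :
    S.E (fun ω => l * (f ω + c)) = l * (S.E f + c) := by
  rw [show (fun ω => l * (f ω + c)) = l • (f + fun _ => c) from rfl,
    S.poshom _ (S.H.add_mem hf (S.const_mem c)) l hl, S.E_add_const hf]

theorem E_le_of_le_const (hf : f ∈ S.H) {c : ℝ} (h : ∀ ω, f ω ≤ c) : S.E f ≤ c :=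
  S.const c ▸ S.mono f (fun _ => c) hf (S.const_mem c) h

theorem E_add_E_neg_pos_of_E_add_lt (hf : f ∈ S.H) (hg : g ∈ S.H)
    (h : S.E (f + g) < S.E f + S.E g) : 0 < S.E g + S.E (-g) := by
  have := S.subadd (f + g) (-g) (S.H.add_mem hf hg) (S.H.neg_mem hg)
  rw [add_neg_cancel_right] at this
  linarith

end SLE

theorem BLip.mul_add_const {φ : ℝ → ℝ} (hφ : BLip φ) (l c : ℝ) :
    BLip fun x => l * (φ x + c) := by
  obtain ⟨⟨K, hK⟩, C, hC⟩ := hφ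
  refine ⟨⟨_, (lipschitzWith_smul l).comp (hK.add (LipschitzWith.const c))⟩, |l| * (C + |c|),
    fun x => ?_⟩
  rw [abs_mul]
  exact mul_le_mul_of_nonneg_left ((abs_add_le _ _).trans (by linarith [hC x])) (abs_nonneg l)

theorem stmt5_general {Ω : Type*} (S : SLE Ω) (X : Ω → ℝ)
    (hcomp : ∀ φ : ℝ → ℝ, BLip φ → (fun ω => φ (X ω)) ∈ S.H)
    (hunc : ∃ ψ₁ ψ₂, BLip ψ₁ ∧ BLip ψ₂ ∧
      S.E (fun ω => ψ₁ (X ω) + ψ₂ (X ω)) ≠ S.E (fun ω => ψ₁ (X ω)) + S.E (fun ω => ψ₂ (X ω))) :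
    ∃ φ, BLip φ ∧ (∀ x, 0 ≤ φ x) ∧
      S.E (fun ω => φ (X ω)) = 1 ∧ - S.E (fun ω => -φ (X ω)) < 1 := by
  obtain ⟨ψ₁, ψ₂, hψ₁, hψ₂, hne⟩ := hunc
  set G : Ω → ℝ := fun ω => ψ₂ (X ω)
  have hG : G ∈ S.H := hcomp ψ₂ hψ₂
  have hspread : 0 < S.E G + S.E (-G) := S.E_add_E_neg_pos_of_E_add_lt (hcomp ψ₁ hψ₁) hG
    ((S.subadd _ _ (hcomp ψ₁ hψ₁) hG).lt_of_ne hne)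
  obtain ⟨C, hC⟩ := hψ₂.2
  have hshift : ∀ x, 0 ≤ ψ₂ x + C := fun x => by linarith [(abs_le.mp (hC x)).1]
  have hEneg : S.E (-G) ≤ C :=
    S.E_le_of_le_const (S.H.neg_mem hG) fun ω =>
      show -ψ₂ (X ω) ≤ C by linarith [hshift (X ω)]
  have hpos : 0 < S.E G + C := by linarith
  set l := (S.E G + C)⁻¹
  have hl : 0 < l := inv_pos.mpr hpos
  have hnorm : l * (S.E G + C) = 1 := inv_mul_cancel₀ hpos.ne'
  refine ⟨fun x => l * (ψ₂ x + C), hψ₂.mul_add_const l C, fun x => mul_nonneg hl.le (hshift x),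
    by rw [S.E_mul_add_const hG hl.le, hnorm], ?_⟩
  have hneg : (fun ω => -(l * (ψ₂ (X ω) + C))) = fun ω => l * ((-G) ω + -C) := by
    funext ω; simp only [G, Pi.neg_apply]; ring
  rw [hneg, S.E_mul_add_const (S.H.neg_mem hG) hl.le]
  linarith [mul_pos hl hspread]

theorem stmt5 {Ω : Type*} (S : SLE Ω) (X : Ω → ℝ) (hX : X ∈ S.H)
    (hcomp : ∀ φ : ℝ → ℝ, BLip φ → (fun ω => φ (X ω)) ∈ S.H)
    (hunc : ∃ ψ₁ ψ₂, BLip ψ₁ ∧ BLip ψ₂ ∧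
      S.E (fun ω => ψ₁ (X ω) + ψ₂ (X ω)) ≠ S.E (fun ω => ψ₁ (X ω)) + S.E (fun ω => ψ₂ (X ω))) :
    ∃ φ, BLip φ ∧ (∀ x, 0 ≤ φ x) ∧
      S.E (fun ω => φ (X ω)) = 1 ∧ - S.E (fun ω => -φ (X ω)) < 1 :=
  stmt5_general S X hcomp hunc
end

section
/- Let E be a sublinear expectation on H, Y ∈ H, ε ∈ [0,1), and G(a) = a⁺ - ε·a⁻. Suppose that E[G(ψ(Y))] = G(E[ψ(Y)]) for all bounded Lipschitz ψ: ℝ → ℝ. Then E[ψ⁺(Y)] = (E[ψ(Y)])⁺ for all bounded Lipschitz ψ, where ψ⁺(y) = max(ψ(y),0). -/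
/-!
With `G_c(a) = a⁺ - c a⁻` (`scaleNegPart c`) one has `G_c ∘ G_d = G_{cd}` for `d ≥ 0`, so the hypothesis iterates to
`E[ψ⁺(Y) - εⁿ ψ⁻(Y)] = m⁺ - εⁿ m⁻` with `m = E[ψ(Y)]`. Monotonicity gives `m⁺ - εⁿ m⁻ ≤ E[ψ⁺(Y)]`,
sub-additivity and positive homogeneity give `E[ψ⁺(Y)] ≤ m⁺ - εⁿ m⁻ + εⁿ E[ψ⁻(Y)]`, and `εⁿ → 0`.
-/

def scaleNegPart (c a : ℝ) : ℝ := a⁺ - c * a⁻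

lemma scaleNegPart_of_nonneg (c : ℝ) {a : ℝ} (ha : 0 ≤ a) : scaleNegPart c a = a := by
  simp [scaleNegPart, posPart_eq_self.2 ha, negPart_eq_zero.2 ha]

lemma scaleNegPart_of_nonpos (c : ℝ) {a : ℝ} (ha : a ≤ 0) : scaleNegPart c a = c * a := by
  simp [scaleNegPart, posPart_eq_zero.2 ha, negPart_eq_neg.2 ha]

lemma scaleNegPart_scaleNegPart {c d : ℝ} (hd : 0 ≤ d) (a : ℝ) :
    scaleNegPart c (scaleNegPart d a) = scaleNegPart (c * d) a := by
  rcases le_total 0 a with ha | ha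
  · simp only [scaleNegPart_of_nonneg _ ha]
  · have hda : d * a ≤ 0 := mul_nonpos_of_nonneg_of_nonpos hd ha
    rw [scaleNegPart_of_nonpos _ ha, scaleNegPart_of_nonpos _ ha, scaleNegPart_of_nonpos _ hda,
      mul_assoc]

lemma scaleNegPart_one (a : ℝ) : scaleNegPart 1 a = a := by
  simp [scaleNegPart, posPart_sub_negPart]

lemma lipschitzWith_scaleNegPart (c : ℝ) : LipschitzWith (1 + ‖c‖₊) (scaleNegPart c) := by
  have h : LipschitzWith (1 + ‖c‖₊ * 1) (scaleNegPart c) :=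
    lipschitzWith_posPart.sub ((lipschitzWith_smul c).comp lipschitzWith_negPart)
  rwa [mul_one] at h

lemma LipschitzWith.comp_bLip {f φ : ℝ → ℝ} {K : NNReal} (hf : LipschitzWith K f) (hφ : BLip φ) :
    BLip fun x => f (φ x) := by
  obtain ⟨⟨L, hL⟩, C, hC⟩ := hφ
  refine ⟨⟨K * L, hf.comp hL⟩, |f 0| + K * C, fun x => ?_⟩
  have hdist : |f (φ x) - f 0| ≤ K * |φ x - 0| := by
    simpa only [Real.dist_eq] using hf.dist_le_mul (φ x) 0
  rw [sub_zero] at hdist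
  have hKC : (K : ℝ) * |φ x| ≤ K * C := by gcongr; exact hC x
  linarith [abs_sub_abs_le_abs_sub (f (φ x)) (f 0)]

namespace SLE

variable {Ω : Type*} (S : SLE Ω)

lemma E_sub_smul_le {u v : Ω → ℝ} (hu : u ∈ S.H) (hv : v ∈ S.H) (hv0 : ∀ ω, 0 ≤ v ω)
    {c : ℝ} (hc : 0 ≤ c) : S.E (u - c • v) ≤ S.E u :=
  S.mono _ _ (sub_mem hu (S.H.smul_mem c hv)) hu fun ω =>
    sub_le_self _ (mul_nonneg hc (hv0 ω))

lemma E_le_E_sub_smul_add {u v : Ω → ℝ} (hu : u ∈ S.H) (hv : v ∈ S.H) {c : ℝ} (hc : 0 ≤ c) :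
    S.E u ≤ S.E (u - c • v) + c * S.E v := by
  have hcv : c • v ∈ S.H := S.H.smul_mem c hv
  calc S.E u = S.E (u - c • v + c • v) := by rw [sub_add_cancel]
    _ ≤ S.E (u - c • v) + S.E (c • v) := S.subadd _ _ (sub_mem hu hcv) hcv
    _ = S.E (u - c • v) + c * S.E v := by rw [S.poshom v hv c hc]

lemma E_eq_of_E_sub_pow_smul {u v : Ω → ℝ} (hu : u ∈ S.H) (hv : v ∈ S.H) (hv0 : ∀ ω, 0 ≤ v ω)
    {ε a b : ℝ} (hε : 0 ≤ ε) (hε1 : ε < 1) (hE : ∀ n : ℕ, S.E (u - ε ^ n • v) = a - ε ^ n * b) :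
    S.E u = a := by
  have hpow : Filter.Tendsto (fun n : ℕ => ε ^ n) Filter.atTop (nhds 0) :=
    tendsto_pow_atTop_nhds_zero_of_lt_one hε hε1
  have hlower : Filter.Tendsto (fun n : ℕ => a - ε ^ n * b) Filter.atTop (nhds a) := by
    simpa using tendsto_const_nhds.sub (hpow.mul_const b)
  have hupper : Filter.Tendsto (fun n : ℕ => a - ε ^ n * b + ε ^ n * S.E v) Filter.atTop
      (nhds a) := by
    simpa using hlower.add (hpow.mul_const (S.E v))
  refine le_antisymm (ge_of_tendsto' hupper fun n => ?_) (le_of_tendsto' hlower fun n => ?_)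
  · rw [← hE n]
    exact S.E_le_E_sub_smul_add hu hv (pow_nonneg hε n)
  · rw [← hE n]
    exact S.E_sub_smul_le hu hv hv0 (pow_nonneg hε n)

lemma E_scaleNegPart_pow_comp {Y : Ω → ℝ} {ε : ℝ} (hε : 0 ≤ ε)
    (h : ∀ ψ, BLip ψ →
      S.E (fun ω => scaleNegPart ε (ψ (Y ω))) = scaleNegPart ε (S.E fun ω => ψ (Y ω)))
    {ψ : ℝ → ℝ} (hψ : BLip ψ) (n : ℕ) :
    S.E (fun ω => scaleNegPart (ε ^ n) (ψ (Y ω))) =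
      scaleNegPart (ε ^ n) (S.E fun ω => ψ (Y ω)) := by
  induction n with
  | zero => simp only [pow_zero, scaleNegPart_one]
  | succ n ih =>
    have hstep := h _ ((lipschitzWith_scaleNegPart (ε ^ n)).comp_bLip hψ)
    simp only [scaleNegPart_scaleNegPart (pow_nonneg hε n), ih] at hstep
    rw [pow_succ', ← hstep]

end SLE

theorem stmt7_general {Ω : Type*} (S : SLE Ω) (Y : Ω → ℝ)
    (hcomp : ∀ φ : ℝ → ℝ, BLip φ → (fun ω => φ (Y ω)) ∈ S.H)
    (ε : ℝ) (hε : 0 ≤ ε) (hε1 : ε < 1)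
    (G : ℝ → ℝ) (hG : ∀ a, G a = max a 0 - ε * max (-a) 0)
    (h : ∀ ψ, BLip ψ → S.E (fun ω => G (ψ (Y ω))) = G (S.E (fun ω => ψ (Y ω)))) :
    ∀ ψ, BLip ψ → S.E (fun ω => max (ψ (Y ω)) 0) = max (S.E (fun ω => ψ (Y ω))) 0 := by
  obtain rfl : G = scaleNegPart ε := funext hG
  intro ψ hψ
  have hpos := hcomp _ (lipschitzWith_posPart.comp_bLip hψ)
  have hneg := hcomp _ (lipschitzWith_negPart.comp_bLip hψ)
  exact S.E_eq_of_E_sub_pow_smul hpos hneg (fun ω => negPart_nonneg _) hε hε1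
    (S.E_scaleNegPart_pow_comp hε h hψ)

theorem stmt7 {Ω : Type*} (S : SLE Ω) (Y : Ω → ℝ) (hY : Y ∈ S.H)
    (hcomp : ∀ φ : ℝ → ℝ, BLip φ → (fun ω => φ (Y ω)) ∈ S.H)
    (ε : ℝ) (hε : 0 ≤ ε) (hε1 : ε < 1)
    (G : ℝ → ℝ) (hG : ∀ a, G a = max a 0 - ε * max (-a) 0)
    (h : ∀ ψ, BLip ψ → S.E (fun ω => G (ψ (Y ω))) = G (S.E (fun ω => ψ (Y ω)))) :
    ∀ ψ, BLip ψ → S.E (fun ω => max (ψ (Y ω)) 0) = max (S.E (fun ω => ψ (Y ω))) 0 :=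
  stmt7_general S Y hcomp ε hε hε1 G hG h
end

section
/- Let Ê be a sublinear expectation on H = C_{b.Lip}(ℝ), X and Y random variables with Ê[X] = Ê[-X] = 0, X and Y identically distributed, σ̄² := Ê[X²] > σ² := -Ê[-X²], and Ê[|X|] > 0. If Y is independent from X, then Ê[XY²] = (σ̄² - σ²)·Ê[X⁺] > 0, where Ê[X⁺] = ½Ê[|X|]. -/
lemma SLE.add_mean_zero {Ω : Type*} (S : SLE Ω) (f g : Ω → ℝ)
    (hf : f ∈ S.H) (hg : g ∈ S.H)
    (h1 : S.E g = 0) (h2 : S.E (-g) = 0) :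
    S.E (f + g) = S.E f := by
  have hfg : f + g ∈ S.H := S.H.add_mem hf hg
  have hng : -g ∈ S.H := S.H.neg_mem hg
  have le1 := S.subadd f g hf hg
  have le2 := S.subadd (f + g) (-g) hfg hng
  have hcan : (f + g) + (-g) = f := by
    funext ω; simp
  rw [hcan] at le2
  rw [h1] at le1
  rw [h2] at le2
  linarith

theorem stmt14 {Ω : Type*} (S : SLE Ω) (X Y : Ω → ℝ)
    (hmem : ∀ φ : ℝ → ℝ → ℝ, (fun ω => φ (X ω) (Y ω)) ∈ S.H)
    (hX0 : S.E X = 0) (hXn0 : S.E (-X) = 0)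
    (hvar : - S.E (fun ω => -(X ω ^ 2)) < S.E (fun ω => X ω ^ 2))
    (habs : 0 < S.E (fun ω => |X ω|))
    (hident : ∀ φ : ℝ → ℝ, Continuous φ →
      S.E (fun ω => φ (X ω)) = S.E (fun ω => φ (Y ω)))
    (hind : S.E (fun ω => X ω * Y ω ^ 2) =
      S.E (fun ω => S.E (fun ω' => X ω * Y ω' ^ 2))) :
    S.E (fun ω => X ω * Y ω ^ 2) =
      (S.E (fun ω => X ω ^ 2) - (- S.E (fun ω => -(X ω ^ 2)))) * S.E (fun ω => max (X ω) 0) ∧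
    0 < S.E (fun ω => X ω * Y ω ^ 2) ∧
    S.E (fun ω => max (X ω) 0) = (1 / 2) * S.E (fun ω => |X ω|) := by
  have memX : ∀ f : ℝ → ℝ, (fun ω => f (X ω)) ∈ S.H := fun f => hmem (fun a _ => f a)
  have memY : ∀ f : ℝ → ℝ, (fun ω => f (Y ω)) ∈ S.H := fun f => hmem (fun _ b => f b)
  set sb := S.E (fun ω => X ω ^ 2) with hsb
  set sl := - S.E (fun ω => -(X ω ^ 2)) with hsl
  have hEnX : S.E (fun ω => -(X ω ^ 2)) = -sl := by rw [hsl]; ring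
  -- sl ≥ 0
  have hsl0 : 0 ≤ sl := by
    have h := S.mono (fun ω => -(X ω ^ 2)) (fun _ => (0 : ℝ))
      (memX (fun x => -(x ^ 2))) (S.const_mem 0)
      (fun ω => by simpa using neg_nonpos.mpr (sq_nonneg (X ω)))
    rw [S.const 0] at h
    linarith [hEnX ▸ h]
  have hdiff : 0 < sb - sl := by linarith
  -- Y moments
  have hY2 : S.E (fun ω => Y ω ^ 2) = sb := (hident (fun x => x ^ 2) (continuous_pow 2)).symm
  have hYn2 : S.E (fun ω => -(Y ω ^ 2)) = -sl := by
    rw [← hEnX]; exact (hident (fun x => -(x ^ 2)) (continuous_pow 2).neg).symm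
  -- inner expectation
  have hinner : ∀ x : ℝ, S.E (fun ω' => x * Y ω' ^ 2) = sl * x + (sb - sl) * max x 0 := by
    intro x
    rcases le_or_gt 0 x with hx | hx
    · have hp := S.poshom (fun ω' => Y ω' ^ 2) (memY (fun y => y ^ 2)) x hx
      have heq : (fun ω' => x * Y ω' ^ 2) = x • (fun ω' => Y ω' ^ 2) := rfl
      rw [heq, hp, hY2, max_eq_left hx]; ring
    · have hp := S.poshom (fun ω' => -(Y ω' ^ 2)) (memY (fun y => -(y ^ 2))) (-x) (by linarith)
      have heq : (fun ω' => x * Y ω' ^ 2) = (-x) • (fun ω' => -(Y ω' ^ 2)) := by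
        funext ω'; show x * Y ω' ^ 2 = -x * -(Y ω' ^ 2); ring
      rw [heq, hp, hYn2, max_eq_right hx.le]; ring
  -- middle step
  have hmid : S.E (fun ω => X ω * Y ω ^ 2)
      = S.E (fun ω => sl * X ω + (sb - sl) * max (X ω) 0) := by
    rw [hind]
    congr 1
    funext ω
    exact hinner (X ω)
  -- mean-zero of sl • X
  have hgz : S.E (fun ω => sl * X ω) = 0 := by
    have hp := S.poshom X (memX id) sl hsl0
    have heq : (fun ω => sl * X ω) = sl • X := rfl
    rw [heq, hp, hX0, mul_zero]
  have hgnz : S.E (-(fun ω => sl * X ω)) = 0 := by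
    have hp := S.poshom (-X) (memX (fun x => -x)) sl hsl0
    have heq : (-(fun ω => sl * X ω)) = sl • (-X) := by
      funext ω; show -(sl * X ω) = sl * (-X ω); ring
    rw [heq, hp, hXn0, mul_zero]
  -- additivity
  have hsplit : S.E (fun ω => sl * X ω + (sb - sl) * max (X ω) 0)
      = S.E (fun ω => (sb - sl) * max (X ω) 0) := by
    have heq : (fun ω => sl * X ω + (sb - sl) * max (X ω) 0)
        = (fun ω => (sb - sl) * max (X ω) 0) + (fun ω => sl * X ω) := by
      funext ω; simp [Pi.add_apply]; ring
    rw [heq]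
    exact S.add_mean_zero _ _ (memX (fun x => (sb - sl) * max x 0)) (memX (fun x => sl * x)) hgz hgnz
  have hEmax : S.E (fun ω => (sb - sl) * max (X ω) 0) = (sb - sl) * S.E (fun ω => max (X ω) 0) := by
    have hp := S.poshom (fun ω => max (X ω) 0) (memX (fun x => max x 0)) (sb - sl) hdiff.le
    have heq : (fun ω => (sb - sl) * max (X ω) 0) = (sb - sl) • (fun ω => max (X ω) 0) := rfl
    rw [heq, hp]
  -- E[X⁺] = ½ E|X|
  have habsX : S.E (fun ω => |X ω| + X ω) = S.E (fun ω => |X ω|) := by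
    have heq : (fun ω => |X ω| + X ω) = (fun ω => |X ω|) + X := rfl
    rw [heq]
    exact S.add_mean_zero _ _ (memX (fun x => |x|)) (memX id) hX0 hXn0
  have hplus : S.E (fun ω => max (X ω) 0) = (1 / 2) * S.E (fun ω => |X ω|) := by
    have heq : (fun ω => max (X ω) 0) = ((1 : ℝ) / 2) • (fun ω => |X ω| + X ω) := by
      funext ω
      rcases le_total 0 (X ω) with h | h
      · show max (X ω) 0 = (1:ℝ)/2 * (|X ω| + X ω)
        rw [max_eq_left h, abs_of_nonneg h]; ring
      · show max (X ω) 0 = (1:ℝ)/2 * (|X ω| + X ω)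
        rw [max_eq_right h, abs_of_nonpos h]; ring
    rw [heq, S.poshom _ (memX (fun x => |x| + x)) (1 / 2) (by norm_num), habsX]
  have hmain : S.E (fun ω => X ω * Y ω ^ 2) = (sb - sl) * S.E (fun ω => max (X ω) 0) := by
    rw [hmid, hsplit, hEmax]
  refine ⟨hmain, ?_, hplus⟩
  rw [hmain, hplus]
  positivity
end

section
/- Let Ê be a sublinear expectation on H = C_{b.Lip}(ℝ²) with X, Y as in the previous setting: Ê[X] = Ê[-X] = 0, σ̄² = Ê[X²] > σ² = -Ê[-X²], Ê[|X|] > 0, X and Y identically distributed. If X is independent from Y, then Ê[XY²] = 0, whereas if Y is independent from X then Ê[XY²] = (σ̄² - σ²)Ê[X⁺] > 0. Hence X and Y cannot be simultaneously independent from each other in such a situation. -/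
theorem stmt15 {Ω : Type*} (S : SLE Ω) (X Y : Ω → ℝ)
    (hmem : ∀ φ : ℝ → ℝ → ℝ, (fun ω => φ (X ω) (Y ω)) ∈ S.H)
    (hX0 : S.E X = 0) (hXn0 : S.E (-X) = 0)
    (hvar : - S.E (fun ω => -(X ω ^ 2)) < S.E (fun ω => X ω ^ 2))
    (habs : 0 < S.E (fun ω => |X ω|))
    (hident : ∀ φ : ℝ → ℝ, Continuous φ →
      S.E (fun ω => φ (X ω)) = S.E (fun ω => φ (Y ω))) :
    ((S.E (fun ω => X ω * Y ω ^ 2) = S.E (fun ω => S.E (fun ω' => X ω' * Y ω ^ 2))) →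
      S.E (fun ω => X ω * Y ω ^ 2) = 0) ∧
    ((S.E (fun ω => X ω * Y ω ^ 2) = S.E (fun ω => S.E (fun ω' => X ω * Y ω' ^ 2))) →
      (S.E (fun ω => X ω * Y ω ^ 2) =
        (S.E (fun ω => X ω ^ 2) - (- S.E (fun ω => -(X ω ^ 2)))) * S.E (fun ω => max (X ω) 0) ∧
       0 < S.E (fun ω => X ω * Y ω ^ 2))) ∧
    ¬ ((S.E (fun ω => X ω * Y ω ^ 2) = S.E (fun ω => S.E (fun ω' => X ω' * Y ω ^ 2))) ∧
       (S.E (fun ω => X ω * Y ω ^ 2) = S.E (fun ω => S.E (fun ω' => X ω * Y ω' ^ 2)))) := by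
  have hXmem : X ∈ S.H := hmem (fun x _ => x)
  have hY2mem : (fun ω => Y ω ^ 2) ∈ S.H := hmem (fun _ y => y ^ 2)
  have hYn2mem : (fun ω => -(Y ω ^ 2)) ∈ S.H := hmem (fun _ y => -(y ^ 2))
  set sb2 := S.E (fun ω => X ω ^ 2) with hsb2
  set s2 := - S.E (fun ω => -(X ω ^ 2)) with hs2
  -- s2 ≥ 0
  have hs2nonneg : 0 ≤ s2 := by
    have h1 : S.E (fun ω => -(X ω ^ 2)) ≤ S.E (fun _ => (0:ℝ)) :=
      S.mono _ _ (hmem (fun x _ => -(x ^ 2))) (S.const_mem 0)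
        (fun ω => by nlinarith [sq_nonneg (X ω)])
    rw [S.const] at h1
    simp only [hs2]; linarith
  have ha : 0 < sb2 - s2 := by linarith
  -- identical distribution facts
  have hY2 : S.E (fun ω => Y ω ^ 2) = sb2 :=
    (hident (fun t => t ^ 2) (by continuity)).symm
  have hYn2 : S.E (fun ω => -(Y ω ^ 2)) = -s2 := by
    have := (hident (fun t => -(t ^ 2)) (by continuity)).symm
    simp only [hs2]; linarith [this]
  -- Part 1
  have part1 : (S.E (fun ω => X ω * Y ω ^ 2) = S.E (fun ω => S.E (fun ω' => X ω' * Y ω ^ 2))) →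
      S.E (fun ω => X ω * Y ω ^ 2) = 0 := by
    intro h
    rw [h]
    have hz : (fun ω => S.E (fun ω' => X ω' * Y ω ^ 2)) = (fun _ : Ω => (0:ℝ)) := by
      funext ω
      have h1 : (fun ω' => X ω' * Y ω ^ 2) = (Y ω ^ 2) • X := by
        funext ω'; simp [mul_comm]
      rw [h1, S.poshom X hXmem _ (sq_nonneg _), hX0, mul_zero]
    rw [hz, S.const]
  -- inner value for part 2
  have hinner : ∀ x : ℝ, S.E (fun ω' => x * Y ω' ^ 2) = (sb2 - s2) * max x 0 + s2 * x := by
    intro x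
    rcases le_or_gt 0 x with hx | hx
    · have h1 : (fun ω' => x * Y ω' ^ 2) = x • (fun ω' => Y ω' ^ 2) := by
        funext ω'; simp
      rw [h1, S.poshom _ hY2mem x hx, hY2, max_eq_left hx]; ring
    · have h1 : (fun ω' => x * Y ω' ^ 2) = (-x) • (fun ω' => -(Y ω' ^ 2)) := by
        funext ω'; simp only [Pi.smul_apply, smul_eq_mul]; ring
      rw [h1, S.poshom _ hYn2mem (-x) (by linarith), hYn2, max_eq_right hx.le]; ring
  -- E[X⁺] > 0
  have hXplusmem : (fun ω => max (X ω) 0) ∈ S.H := hmem (fun x _ => max x 0)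
  have hXplus : 0 < S.E (fun ω => max (X ω) 0) := by
    have habs' : (fun ω => |X ω|) = ((2:ℝ) • (fun ω => max (X ω) 0)) + (-X) := by
      funext ω
      simp only [Pi.add_apply, Pi.smul_apply, Pi.neg_apply, smul_eq_mul]
      rcases le_or_gt 0 (X ω) with h | h
      · rw [abs_of_nonneg h, max_eq_left h]; ring
      · rw [abs_of_neg h, max_eq_right h.le]; ring
    have hle := S.subadd _ _ (S.H.smul_mem 2 hXplusmem) (S.H.neg_mem hXmem)
    rw [← habs', S.poshom _ hXplusmem 2 (by norm_num), hXn0] at hle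
    linarith
  -- Part 2
  have part2 : (S.E (fun ω => X ω * Y ω ^ 2) = S.E (fun ω => S.E (fun ω' => X ω * Y ω' ^ 2))) →
      (S.E (fun ω => X ω * Y ω ^ 2) = (sb2 - s2) * S.E (fun ω => max (X ω) 0) ∧
       0 < S.E (fun ω => X ω * Y ω ^ 2)) := by
    intro h
    have hfun : (fun ω => S.E (fun ω' => X ω * Y ω' ^ 2)) =
        ((sb2 - s2) • (fun ω => max (X ω) 0)) + s2 • X := by
      funext ω
      simp only [Pi.add_apply, Pi.smul_apply, smul_eq_mul]
      exact hinner (X ω)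
    set g : Ω → ℝ := (sb2 - s2) • (fun ω => max (X ω) 0) with hg
    have hgmem : g ∈ S.H := S.H.smul_mem _ hXplusmem
    have hEg : S.E g = (sb2 - s2) * S.E (fun ω => max (X ω) 0) :=
      S.poshom _ hXplusmem _ ha.le
    have hEbX : S.E (s2 • X) = 0 := by
      rw [S.poshom X hXmem s2 hs2nonneg, hX0, mul_zero]
    have hEbXn : S.E (s2 • (-X)) = 0 := by
      rw [S.poshom _ (S.H.neg_mem hXmem) s2 hs2nonneg, hXn0, mul_zero]
    have h1 : S.E (g + s2 • X) ≤ S.E g := by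
      have := S.subadd g (s2 • X) hgmem (S.H.smul_mem _ hXmem)
      linarith
    have h2 : S.E g ≤ S.E (g + s2 • X) := by
      have hdecomp : g = (g + s2 • X) + s2 • (-X) := by
        funext ω; simp only [Pi.add_apply, Pi.smul_apply, Pi.neg_apply, smul_eq_mul]; ring
      calc S.E g = S.E ((g + s2 • X) + s2 • (-X)) := by rw [← hdecomp]
        _ ≤ S.E (g + s2 • X) + S.E (s2 • (-X)) :=
            S.subadd _ _ (S.H.add_mem hgmem (S.H.smul_mem _ hXmem))
              (S.H.smul_mem _ (S.H.neg_mem hXmem))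
        _ = S.E (g + s2 • X) := by rw [hEbXn]; ring
    have hval : S.E (fun ω => X ω * Y ω ^ 2) = (sb2 - s2) * S.E (fun ω => max (X ω) 0) := by
      rw [h, hfun]
      have : S.E (g + s2 • X) = S.E g := le_antisymm h1 h2
      rw [this, hEg]
    exact ⟨hval, by rw [hval]; positivity⟩
  refine ⟨part1, part2, ?_⟩
  rintro ⟨h1, h2⟩
  have e1 := part1 h1
  have e2 := (part2 h2).2
  linarith
end
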